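/- arXiv:2109.12473 — 5 statements merged into one kernel-verified Lean document; each statement's English description precedes it below -/
import Mathlib

section
/- If for every pair of bounds (c, m) there exists an iteration n of the execution at which either some initialized chain has length exceeding m or some marginalized chain has length exceeding c, then the execution is not low-level bounded-memory: there is no constant k such that for all n the number of reachable nodes is at most k times the number of root variables, even when the number of root variables is uniformly bounded. -/
/-- Consider an execution described at each iteration `n` by the number of
root variables `rootCount n` in the state, the number of reachable nodes `reachCount n`,
and the lengths `initLen n` and `margLen n` of the longest initialized and marginalized
chains. Chains starting from reachable roots contribute their nodes to the reachable set
(`hinit`, `hmarg`), and the number of root variables is uniformly bounded (`hroots`).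
If for every pair of bounds `(c, m)` there is an iteration where some initialized chain
exceeds `m` or some marginalized chain exceeds `c`, then the execution is not low-level
bounded-memory: there is no constant `k` with `reachCount n ≤ k * rootCount n` for all `n`. -/
theorem stmt1 (rootCount reachCount initLen margLen : ℕ → ℕ) (B : ℕ)
    (hroots : ∀ n, rootCount n ≤ B)
    (hinit : ∀ n, initLen n ≤ reachCount n)
    (hmarg : ∀ n, margLen n ≤ reachCount n)
    (hchains : ∀ c m : ℕ, ∃ n, m < initLen n ∨ c < margLen n) :
    ¬ ∃ k : ℕ, ∀ n, reachCount n ≤ k * rootCount n := by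
  rintro ⟨k, hk⟩
  obtain ⟨n, h⟩ := hchains (k * B) (k * B)
  have h1 : reachCount n ≤ k * B :=
    (hk n).trans (Nat.mul_le_mul_left k (hroots n))
  have h2 := hinit n
  have h3 := hmarg n
  omega
end

section
/- Adding an observe event obs(X) to a trace makes X a separator, and thus any unseparated path in the extended trace contains neither X nor any variable in the lower-bound set r.lb that was evaluated; consequently the abstract observe operation observe_up(X, r, G) = (G.p, G.sep ∪ r.lb ∪ {X}) soundly preserves trace entailment. -/
/-- Primitive trace events: assumptions `X ⇜ X'` or `X ⇜ nil`, evaluation of a set of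
random variables, and observation of a random variable. -/
inductive Event (V : Type*) where
  | assume (x : V) (parent : Option V)
  | eval (s : Set V)
  | obs (x : V)

/-- A trace is a finite list of primitive events. -/
abbrev Trace (V : Type*) := List (Event V)

/-- A variable is 0-consumed if it is evaluated or observed in the trace. -/
def zeroConsumed {V : Type*} (τ : Trace V) (x : V) : Prop :=
  (∃ s, Event.eval s ∈ τ ∧ x ∈ s) ∨ Event.obs x ∈ τ

/-- `mConsumed τ m x`: `x` is `m`-consumed in the trace `τ`. -/
def mConsumed {V : Type*} (τ : Trace V) : ℕ → V → Prop
  | 0, x => zeroConsumed τ x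
  | m + 1, x => ∃ x', Event.assume x' (some x) ∈ τ ∧ mConsumed τ m x'

/-- A variable is introduced if some assume event introduces it. -/
def introduced {V : Type*} (τ : Trace V) (x : V) : Prop :=
  ∃ p, Event.assume x p ∈ τ

/-- The unseparated-paths abstract graph, with finite separator set. -/
structure UPGraph (V : Type*) where
  p : V → V → ℕ
  sep : Finset V

/-- There is an unseparated path in `τ` from `X₁` to `X₂` of length `n`. -/
def UnsepPathLen {V : Type*} (τ : Trace V) (X₁ X₂ : V) (n : ℕ) : Prop :=
  ∃ f : ℕ → V, f 0 = X₁ ∧ f n = X₂ ∧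
    (∀ i < n, Event.assume (f (i + 1)) (some (f i)) ∈ τ) ∧
    (∀ i ≤ n, ¬ zeroConsumed τ (f i))

/-- Trace entailment of an abstract graph. -/
def EntailsUP {V : Type*} (τ : Trace V) (G : UPGraph V) : Prop :=
  (∀ X₁ X₂ n, UnsepPathLen τ X₁ X₂ n → n ≤ G.p X₁ X₂) ∧
  (∀ X ∈ G.sep, zeroConsumed τ X)

/-- The abstract observe operation: `observe_up(X, r, G) = (G.p, G.sep ∪ r.lb ∪ {X})`. -/
def observeUP {V : Type*} [DecidableEq V] (X : V) (lb : Finset V) (G : UPGraph V) :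
    UPGraph V :=
  ⟨G.p, G.sep ∪ lb ∪ {X}⟩

/-- appending the eval/obs events of a traced observe operation (where the
evaluated set `S` contains at least the lower-bound set `lb`) makes `X` a separator, so
every unseparated path of the extended trace avoids `X` and every variable in `lb`, and
consequently the abstract observe operation `observeUP X lb G` soundly preserves trace
entailment. -/
theorem stmt14 {V : Type*} [DecidableEq V] (τ : Trace V) (G : UPGraph V)
    (X : V) (lb : Finset V) (S : Set V)
    (hent : EntailsUP τ G) (hlb : ∀ x ∈ lb, x ∈ S) :
    zeroConsumed (τ ++ [Event.eval S, Event.obs X]) X ∧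
    (∀ (f : ℕ → V) (n : ℕ),
      ((∀ i < n, Event.assume (f (i + 1)) (some (f i)) ∈ τ ++ [Event.eval S, Event.obs X]) ∧
       (∀ i ≤ n, ¬ zeroConsumed (τ ++ [Event.eval S, Event.obs X]) (f i))) →
      ∀ i ≤ n, f i ≠ X ∧ f i ∉ lb) ∧
    EntailsUP (τ ++ [Event.eval S, Event.obs X]) (observeUP X lb G) := by
  have hX : zeroConsumed (τ ++ [Event.eval S, Event.obs X]) X :=
    Or.inr (by simp)
  have hS : ∀ x ∈ S, zeroConsumed (τ ++ [Event.eval S, Event.obs X]) x := by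
    intro x hx
    exact Or.inl ⟨S, by simp, hx⟩
  have hmono : ∀ x, zeroConsumed τ x → zeroConsumed (τ ++ [Event.eval S, Event.obs X]) x := by
    intro x hx
    rcases hx with ⟨s, hs, hxs⟩ | h
    · exact Or.inl ⟨s, List.mem_append_left _ hs, hxs⟩
    · exact Or.inr (List.mem_append_left _ h)
  refine ⟨hX, ?_, ?_, ?_⟩
  · rintro f n ⟨_, hns⟩ i hi
    have := hns i hi
    constructor
    · rintro rfl; exact this hX
    · intro hmem; exact this (hS _ (hlb _ hmem))
  · rintro X₁ X₂ n ⟨f, h0, hn, hstep, hns⟩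
    apply hent.1 X₁ X₂ n
    refine ⟨f, h0, hn, ?_, ?_⟩
    · intro i hi
      rcases List.mem_append.1 (hstep i hi) with h | h
      · exact h
      · simp at h
    · intro i hi hz
      exact hns i hi (hmono _ hz)
  · intro Y hY
    simp only [observeUP, Finset.mem_union, Finset.mem_singleton] at hY
    rcases hY with (h | h) | rfl
    · exact hmono _ (hent.2 Y h)
    · exact hS _ (hlb _ h)
    · exact hX
end

section
/- Monotonicity of the m-consumed iteration: in the iterated analysis judgment, the set of introduced-but-not-consumed variables G_n.in \ G_n.con is non-increasing in n whenever each iteration only adds to con the consumption of previously introduced variables and introduces fresh variables not retained in the state type; consequently, the iteration either consumes a new state variable at each step or reaches a fixed point, so the m-consumed analysis terminates. -/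
/-- The m-consumed abstract graph: finite sets of introduced and consumed variables. -/
structure MCGraph (V : Type*) where
  intro : Finset V
  con : Finset V

/-- monotonicity and termination of the m-consumed iteration. Let
`G n` be the abstract graph after `n` iterations of the step-function transformer and let
`S` be the (finite) set of variables referenced by the state type. If each iteration only
adds to the consumed set (`hcon`) and the freshly introduced variables are not retained
in the state (`hfresh`), then the set of introduced-but-not-consumed state variables
`(G n).intro \ (G n).con ∩ S` is non-increasing in `n`; hence at each step it either
strictly shrinks (a new state variable is consumed) or stays fixed, and the iteration
stabilizes after finitely many steps, so the analysis terminates. -/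
theorem stmt16 {V : Type*} [DecidableEq V] (G : ℕ → MCGraph V) (S : Finset V)
    (hcon : ∀ n, (G n).con ⊆ (G (n + 1)).con)
    (hfresh : ∀ n, ∀ x ∈ S, x ∈ (G (n + 1)).intro → x ∈ (G n).intro) :
    (∀ n, (((G (n + 1)).intro \ (G (n + 1)).con) ∩ S) ⊆ (((G n).intro \ (G n).con) ∩ S)) ∧
    (∀ n, ((((G (n + 1)).intro \ (G (n + 1)).con) ∩ S) ⊂ (((G n).intro \ (G n).con) ∩ S)) ∨
      ((((G (n + 1)).intro \ (G (n + 1)).con) ∩ S) = (((G n).intro \ (G n).con) ∩ S))) ∧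
    (∃ N, ∀ k, N ≤ k →
      (((G k).intro \ (G k).con) ∩ S) = (((G N).intro \ (G N).con) ∩ S)) := by
  set f : ℕ → Finset V := fun n => ((G n).intro \ (G n).con) ∩ S with hf
  have hmono : ∀ n, f (n + 1) ⊆ f n := by
    intro n x hx
    simp only [hf, Finset.mem_inter, Finset.mem_sdiff] at hx ⊢
    exact ⟨⟨hfresh n x hx.2 hx.1.1, fun hc => hx.1.2 (hcon n hc)⟩, hx.2⟩
  have hchain : ∀ {m n : ℕ}, m ≤ n → f n ⊆ f m := by
    intro m n h
    induction h with
    | refl => exact subset_rfl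
    | step _ ih => exact fun x hx => ih (hmono _ hx)
  refine ⟨hmono, fun n => (hmono n).ssubset_or_eq, ?_⟩
  -- stabilization: pick N achieving the minimal cardinality
  have hne : (Set.range fun n => (f n).card).Nonempty := ⟨(f 0).card, 0, rfl⟩
  obtain ⟨N, hN⟩ := Nat.sInf_mem hne
  refine ⟨N, fun k hk => Finset.eq_of_subset_of_card_le (hchain hk) ?_⟩
  simp only [] at hN
  show (f N).card ≤ (f k).card
  rw [hN]
  exact Nat.sInf_le ⟨k, rfl⟩
end

section
/- If every execution of a model's step function is bounded-memory, then every state-graph pair in the support of the distribution produced by the inference step function at iteration n arises from some bounded-memory execution of the step function; hence the inference procedure itself executes in bounded memory. -/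
private def extExec {S G O I W : Type*} (f : S → I → G → (O × S) × W × G)
    (inp : ℕ → I) (start : ℕ) (p : G × S) : ℕ → G × S
  | 0 => p
  | j + 1 =>
      let q := extExec f inp start p j
      let r := f q.2 (inp (start + j)) q.1
      (r.2.2, r.1.2)

private lemma extExec_step {S G O I W : Type*} (f : S → I → G → (O × S) × W × G)
    (inp : ℕ → I) (start : ℕ) (p : G × S) (j : ℕ) :
    ∃ o w, f (extExec f inp start p j).2 (inp (start + j)) (extExec f inp start p j).1 =
      ((o, (extExec f inp start p (j + 1)).2), w, (extExec f inp start p (j + 1)).1) := by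
  refine ⟨(f (extExec f inp start p j).2 (inp (start + j)) (extExec f inp start p j).1).1.1,
    (f (extExec f inp start p j).2 (inp (start + j)) (extExec f inp start p j).1).2.1, ?_⟩
  simp [extExec]

/-- execution sufficiency for inference. The model step function
`f : S → I → G → (O × S) × W × G` maps a state, an input, and a delayed sampling graph
to an output, a new state, a weight, and a new graph. `μ n` is the support of the
distribution over (graph, state) pairs produced by the inference step function at
iteration `n`: `μ 0` contains only the initial pair, and every pair in `μ (n+1)` is
obtained by applying `f` to some pair in `μ n`. Then every pair in the support of `μ n`
arises from some execution of the step function; hence if every execution of the step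
function is bounded-memory, the inference procedure itself executes in bounded memory
(every support pair is bounded). -/
theorem stmt17 {S G O I W : Type*}
    (f : S → I → G → (O × S) × W × G)
    (inp : ℕ → I) (gInit : G) (sInit : S)
    (μ : ℕ → Set (G × S))
    (Bounded : G × S → Prop)
    (h0 : ∀ p ∈ μ 0, p = (gInit, sInit))
    (hstep : ∀ n, ∀ p ∈ μ (n + 1), ∃ q ∈ μ n, ∃ o w,
      f q.2 (inp n) q.1 = ((o, p.2), w, p.1))
    (hbounded : ∀ gs : ℕ → G × S, gs 0 = (gInit, sInit) →
      (∀ k, ∃ o w, f (gs k).2 (inp k) (gs k).1 = ((o, (gs (k + 1)).2), w, (gs (k + 1)).1)) →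
      ∀ k, Bounded (gs k)) :
    ∀ n, ∀ p ∈ μ n,
      (∃ gs : ℕ → G × S, gs 0 = (gInit, sInit) ∧
        (∀ k, ∃ o w, f (gs k).2 (inp k) (gs k).1 = ((o, (gs (k + 1)).2), w, (gs (k + 1)).1)) ∧
        gs n = p) ∧
      Bounded p := by
  intro n
  induction n with
  | zero =>
    intro p hp
    have hp' := h0 p hp
    subst hp'
    have hsteps : ∀ k, ∃ o w,
        f (extExec f inp 0 (gInit, sInit) k).2 (inp k) (extExec f inp 0 (gInit, sInit) k).1 =
        ((o, (extExec f inp 0 (gInit, sInit) (k + 1)).2), w,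
          (extExec f inp 0 (gInit, sInit) (k + 1)).1) := by
      intro k
      simpa using extExec_step f inp 0 (gInit, sInit) k
    exact ⟨⟨extExec f inp 0 (gInit, sInit), rfl, hsteps, rfl⟩,
      hbounded _ rfl hsteps 0⟩
  | succ n ih =>
    intro p hp
    obtain ⟨q, hq, o, w, hf⟩ := hstep n p hp
    obtain ⟨⟨gs, hgs0, hgsstep, hgsn⟩, _⟩ := ih q hq
    set gs' : ℕ → G × S := fun k =>
      if k ≤ n then gs k else extExec f inp (n + 1) p (k - (n + 1)) with hgs'
    have h0' : gs' 0 = (gInit, sInit) := by simp [hgs', hgs0]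
    have hn1 : gs' (n + 1) = p := by simp [hgs', extExec]
    have hsteps : ∀ k, ∃ o w, f (gs' k).2 (inp k) (gs' k).1 =
        ((o, (gs' (k + 1)).2), w, (gs' (k + 1)).1) := by
      intro k
      rcases lt_trichotomy k n with hk | hk | hk
      · have h1 : gs' k = gs k := by simp [hgs', hk.le]
        have h2 : gs' (k + 1) = gs (k + 1) := by simp [hgs', Nat.succ_le_of_lt hk]
        rw [h1, h2]; exact hgsstep k
      · subst hk
        have h1 : gs' k = q := by simp [hgs', hgsn]
        rw [h1, hn1]
        exact ⟨o, w, hf⟩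
      · have h1 : gs' k = extExec f inp (n + 1) p (k - (n + 1)) := by
          simp [hgs', not_le.mpr hk]
        have h2 : gs' (k + 1) = extExec f inp (n + 1) p (k - (n + 1) + 1) := by
          have : ¬ (k + 1 ≤ n) := by omega
          have harith : k + 1 - (n + 1) = k - (n + 1) + 1 := by omega
          simp [hgs', this, harith]
        have harith2 : (n + 1) + (k - (n + 1)) = k := by omega
        rw [h1, h2]
        have := extExec_step f inp (n + 1) p (k - (n + 1))
        rwa [harith2] at this
    refine ⟨⟨gs', h0', hsteps, hn1⟩, ?_⟩
    have := hbounded gs' h0' hsteps (n + 1)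
    rwa [hn1] at this
end

section
/- Fold entailment: if a structured value v entails a structured type t (componentwise for pairs, with constants entailing (∅, ub) and a random variable X entailing (lb, ub) when lb ⊆ {X} ⊆ ub), and the fold judgment t ↘ (lb, ub) unions lower and upper bounds over all components, then lb ⊆ frv(v) ⊆ ub where frv(v) is the union of free random variables across all components of v. -/
/-- Values: constants, random variables, operator applications, and pairs. -/
inductive Val (V : Type*) where
  | const : Val V
  | rv (x : V) : Val V
  | op (v : Val V) : Val V
  | pair (v₁ v₂ : Val V) : Val V

/-- Free random variables of a value. -/
def frv {V : Type*} [DecidableEq V] : Val V → Finset V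
  | .const => ∅
  | .rv x => {x}
  | .op v => frv v
  | .pair v₁ v₂ => frv v₁ ∪ frv v₂

/-- Types: unit, scalar reference-set pairs `(lb, ub)`, and products. -/
inductive Ty (V : Type*) where
  | unit : Ty V
  | scalar (lb ub : Finset V) : Ty V
  | prod (t₁ t₂ : Ty V) : Ty V

/-- Structural entailment of a type by a value. -/
inductive Entails {V : Type*} [DecidableEq V] : Val V → Ty V → Prop where
  | const (ub : Finset V) : Entails .const (.scalar ∅ ub)
  | rv (x : V) (lb ub : Finset V) (h₁ : lb ⊆ {x}) (h₂ : {x} ⊆ ub) :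
      Entails (.rv x) (.scalar lb ub)
  | op (v : Val V) (lb ub : Finset V) (h₁ : lb ⊆ frv v) (h₂ : frv v ⊆ ub) :
      Entails (.op v) (.scalar lb ub)
  | pair {v₁ v₂ : Val V} {t₁ t₂ : Ty V} (h₁ : Entails v₁ t₁) (h₂ : Entails v₂ t₂) :
      Entails (.pair v₁ v₂) (.prod t₁ t₂)

/-- The fold judgment `t ↘ (lb, ub)`: unions of lower and upper bounds over all
components. -/
inductive Fold {V : Type*} [DecidableEq V] : Ty V → Finset V × Finset V → Prop where
  | unit : Fold .unit (∅, ∅)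
  | scalar (lb ub : Finset V) : Fold (.scalar lb ub) (lb, ub)
  | prod {t₁ t₂ : Ty V} {lb ub lb' ub' : Finset V}
      (h₁ : Fold t₁ (lb, ub)) (h₂ : Fold t₂ (lb', ub')) :
      Fold (.prod t₁ t₂) (lb ∪ lb', ub ∪ ub')

/-- fold entailment. If a structured value `v` entails a structured type
`t` and `t ↘ (lb, ub)`, then `lb ⊆ frv v ⊆ ub`. -/
theorem stmt19 {V : Type*} [DecidableEq V] (v : Val V) (t : Ty V) (lb ub : Finset V)
    (hent : Entails v t) (hfold : Fold t (lb, ub)) :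
    lb ⊆ frv v ∧ frv v ⊆ ub := by
  induction hent generalizing lb ub with
  | const ub => cases hfold; simp [frv]
  | rv x lb' ub' h₁ h₂ => cases hfold; exact ⟨h₁, h₂⟩
  | op v lb' ub' h₁ h₂ => cases hfold; exact ⟨h₁, h₂⟩
  | pair h₁ h₂ ih₁ ih₂ =>
    cases hfold with
    | prod f₁ f₂ =>
      obtain ⟨a1, a2⟩ := ih₁ _ _ f₁
      obtain ⟨b1, b2⟩ := ih₂ _ _ f₂
      exact ⟨Finset.union_subset (a1.trans Finset.subset_union_left)
        (b1.trans Finset.subset_union_right),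
        Finset.union_subset (a2.trans Finset.subset_union_left)
        (b2.trans Finset.subset_union_right)⟩
end
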